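/- arXiv:2211.16633 — 2 statements merged into one kernel-verified Lean document; each statement's English description precedes it below -/
import Mathlib

section
/- Non-increasing iteration costs (Theorem 3, obstacle-free case): let x̂ be an equilibrium (x̂ ∈ X, 0 ∈ U, A x̂ = x̂), let SS and P be the sampled safe set and cost-to-go of a finite nonempty family of admissible trajectories to x̂, and let (xⱼ, uⱼ) be a trajectory of the family of length Tⱼ ≥ N with xⱼ(0) = x̂ᵖ. Let x : ℕ → ℝⁿ, u : ℕ → ℝᵐ be the closed-loop trajectory of a new execution of the task with x(0) = x̂ᵖ, x(k+1) = A x(k) + B u(k), such that for every k there exists an N-step feasible sequence from x(k) attaining the infimum J*(x(k)) whose first input is u(k). Then for every K ≥ 0, Σ_{k=0}^{K−1} h(x(k), u(k)) ≤ Σ_{t=0}^{Tⱼ−1} h(xⱼ(t), uⱼ(t)); i.e., the cost of the new execution does not exceed the cost of any stored execution, regardless of which agent produced the stored trajectory. -/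
open Matrix

/-- Stage cost `h(x,u) = (x − xhat)ᵀ Q (x − xhat) + uᵀ R u`. -/
def stageCost {n m : ℕ} (Q : Matrix (Fin n) (Fin n) ℝ) (R : Matrix (Fin m) (Fin m) ℝ)
    (xhat : Fin n → ℝ) (x : Fin n → ℝ) (u : Fin m → ℝ) : ℝ :=
  (x - xhat) ⬝ᵥ Q.mulVec (x - xhat) + u ⬝ᵥ R.mulVec u

/-- An admissible trajectory of length `T` to `xhat`. -/
def AdmTraj {n m : ℕ} (A : Matrix (Fin n) (Fin n) ℝ) (B : Matrix (Fin n) (Fin m) ℝ)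
    (X : Set (Fin n → ℝ)) (U : Set (Fin m → ℝ)) (xhat : Fin n → ℝ) (T : ℕ)
    (x : ℕ → Fin n → ℝ) (u : ℕ → Fin m → ℝ) : Prop :=
  (∀ t < T, x (t + 1) = A.mulVec (x t) + B.mulVec (u t)) ∧
  (∀ t ≤ T, x t ∈ X) ∧ (∀ t < T, u t ∈ U) ∧ x T = xhat

/-- The sampled safe set of a family of trajectories: all visited states. -/
def sampledSafeSet {n : ℕ} {ι : Type} (T : ι → ℕ)
    (xs : ι → ℕ → Fin n → ℝ) : Set (Fin n → ℝ) :=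
  {z | ∃ i, ∃ t ≤ T i, xs i t = z}

/-- The sampled cost-to-go at a visited state `z`. -/
noncomputable def costToGo {n m : ℕ} {ι : Type}
    (Q : Matrix (Fin n) (Fin n) ℝ) (R : Matrix (Fin m) (Fin m) ℝ) (xhat : Fin n → ℝ)
    (T : ι → ℕ) (xs : ι → ℕ → Fin n → ℝ) (us : ι → ℕ → Fin m → ℝ)
    (z : Fin n → ℝ) : ℝ :=
  sInf {c | ∃ i, ∃ t ≤ T i, xs i t = z ∧
    c = ∑ k ∈ Finset.Ico t (T i), stageCost Q R xhat (xs i k) (us i k)}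

/-- An `N`-step feasible sequence from `x0`. -/
def FeasSeq {n m : ℕ} (A : Matrix (Fin n) (Fin n) ℝ) (B : Matrix (Fin n) (Fin m) ℝ)
    (X : Set (Fin n → ℝ)) (U : Set (Fin m → ℝ)) (SS : Set (Fin n → ℝ)) (N : ℕ)
    (x0 : Fin n → ℝ) (x : ℕ → Fin n → ℝ) (u : ℕ → Fin m → ℝ) : Prop :=
  x 0 = x0 ∧ (∀ t < N, x (t + 1) = A.mulVec (x t) + B.mulVec (u t)) ∧
  (∀ t < N, x (t + 1) ∈ X) ∧ (∀ t < N, u t ∈ U) ∧ x N ∈ SS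

/-- Cost of an `N`-step sequence: stage costs plus terminal cost `P` at the final state. -/
noncomputable def seqCost {n m : ℕ}
    (Q : Matrix (Fin n) (Fin n) ℝ) (R : Matrix (Fin m) (Fin m) ℝ) (xhat : Fin n → ℝ)
    (P : (Fin n → ℝ) → ℝ) (N : ℕ) (x : ℕ → Fin n → ℝ) (u : ℕ → Fin m → ℝ) : ℝ :=
  (∑ t ∈ Finset.range N, stageCost Q R xhat (x t) (u t)) + P (x N)

/-- MPC value function: infimum of the cost over `N`-step feasible sequences from `x0`. -/
noncomputable def Jstar {n m : ℕ}
    (A : Matrix (Fin n) (Fin n) ℝ) (B : Matrix (Fin n) (Fin m) ℝ)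
    (X : Set (Fin n → ℝ)) (U : Set (Fin m → ℝ)) (SS : Set (Fin n → ℝ))
    (Q : Matrix (Fin n) (Fin n) ℝ) (R : Matrix (Fin m) (Fin m) ℝ) (xhat : Fin n → ℝ)
    (P : (Fin n → ℝ) → ℝ) (N : ℕ) (x0 : Fin n → ℝ) : ℝ :=
  sInf {c | ∃ (x : ℕ → Fin n → ℝ) (u : ℕ → Fin m → ℝ),
    FeasSeq A B X U SS N x0 x u ∧ c = seqCost Q R xhat P N x u}



section Aux

variable {n m : ℕ} {ι : Type} [Fintype ι] [Nonempty ι]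
variable {A : Matrix (Fin n) (Fin n) ℝ} {B : Matrix (Fin n) (Fin m) ℝ}
variable {X : Set (Fin n → ℝ)} {U : Set (Fin m → ℝ)}
variable {Q : Matrix (Fin n) (Fin n) ℝ} {R : Matrix (Fin m) (Fin m) ℝ}
variable {xhat : Fin n → ℝ}
variable {T : ι → ℕ} {xs : ι → ℕ → Fin n → ℝ} {us : ι → ℕ → Fin m → ℝ}

lemma stageCost_nonneg (hQ : Q.PosDef) (hR : R.PosDef) (x : Fin n → ℝ) (u : Fin m → ℝ) :
    0 ≤ stageCost Q R xhat x u := by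
  have h1 := hQ.posSemidef.dotProduct_mulVec_nonneg (x - xhat)
  have h2 := hR.posSemidef.dotProduct_mulVec_nonneg u
  simp only [star_trivial, RCLike.re_to_real] at h1 h2
  unfold stageCost
  positivity

/-- The set of candidate costs at a state. -/
def costSet (Q : Matrix (Fin n) (Fin n) ℝ) (R : Matrix (Fin m) (Fin m) ℝ)
    (xhat : Fin n → ℝ) (T : ι → ℕ) (xs : ι → ℕ → Fin n → ℝ) (us : ι → ℕ → Fin m → ℝ)
    (z : Fin n → ℝ) : Set ℝ :=
  {c | ∃ i, ∃ t ≤ T i, xs i t = z ∧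
    c = ∑ k ∈ Finset.Ico t (T i), stageCost Q R xhat (xs i k) (us i k)}

lemma costToGo_eq (z : Fin n → ℝ) :
    costToGo Q R xhat T xs us z = sInf (costSet Q R xhat T xs us z) := rfl

lemma costSet_finite (z : Fin n → ℝ) : (costSet Q R xhat T xs us z).Finite := by
  apply Set.Finite.subset (Set.finite_iUnion (fun i : ι =>
    Set.Finite.image (fun t => ∑ k ∈ Finset.Ico t (T i), stageCost Q R xhat (xs i k) (us i k))
      (Set.finite_Iic (T i))))
  rintro c ⟨i, t, ht, _, rfl⟩
  exact Set.mem_iUnion.2 ⟨i, ⟨t, ht, rfl⟩⟩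

lemma costSet_nonneg (hQ : Q.PosDef) (hR : R.PosDef) {z : Fin n → ℝ}
    {c : ℝ} (hc : c ∈ costSet Q R xhat T xs us z) : 0 ≤ c := by
  obtain ⟨i, t, ht, _, rfl⟩ := hc
  exact Finset.sum_nonneg fun k _ => stageCost_nonneg hQ hR _ _

lemma costSet_nonempty {z : Fin n → ℝ} (hz : z ∈ sampledSafeSet T xs) :
    (costSet Q R xhat T xs us z).Nonempty := by
  obtain ⟨i, t, ht, hxt⟩ := hz
  exact ⟨_, i, t, ht, hxt, rfl⟩

lemma costToGo_nonneg (hQ : Q.PosDef) (hR : R.PosDef) {z : Fin n → ℝ}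
    (hz : z ∈ sampledSafeSet T xs) : 0 ≤ costToGo Q R xhat T xs us z :=
  le_csInf (costSet_nonempty hz) fun _ hc => costSet_nonneg hQ hR hc

lemma costToGo_le {z : Fin n → ℝ} {c : ℝ} (hc : c ∈ costSet Q R xhat T xs us z) :
    costToGo Q R xhat T xs us z ≤ c :=
  csInf_le (costSet_finite z).bddBelow hc

/-- Safe-set invariance with cost decrease. -/
lemma terminal_step (hadm : ∀ i, AdmTraj A B X U xhat (T i) (xs i) (us i))
    (hQ : Q.PosDef) (hR : R.PosDef)
    (hxX : xhat ∈ X) (h0U : (0 : Fin m → ℝ) ∈ U) (heq : A.mulVec xhat = xhat)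
    {z : Fin n → ℝ} (hz : z ∈ sampledSafeSet T xs) :
    ∃ z' u', z' ∈ sampledSafeSet T xs ∧ z' ∈ X ∧ u' ∈ U ∧
      z' = A.mulVec z + B.mulVec u' ∧
      stageCost Q R xhat z u' + costToGo Q R xhat T xs us z' ≤
        costToGo Q R xhat T xs us z := by
  have hmem := Set.Nonempty.csInf_mem (costSet_nonempty (us := us) (Q := Q) (R := R)
    (xhat := xhat) hz) (costSet_finite z)
  rw [← costToGo_eq] at hmem
  obtain ⟨i, t, ht, hxt, hP⟩ := hmem
  rcases lt_or_eq_of_le ht with hlt | heqt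
  · -- t < T i : step along the stored trajectory
    refine ⟨xs i (t + 1), us i t, ⟨i, t + 1, hlt, rfl⟩, (hadm i).2.1 _ hlt,
      (hadm i).2.2.1 _ hlt, by rw [← hxt]; exact (hadm i).1 t hlt, ?_⟩
    have hsplit := Finset.sum_eq_sum_Ico_succ_bot hlt
      (f := fun k => stageCost Q R xhat (xs i k) (us i k))
    have hle : costToGo Q R xhat T xs us (xs i (t + 1)) ≤
        ∑ k ∈ Finset.Ico (t + 1) (T i), stageCost Q R xhat (xs i k) (us i k) :=
      costToGo_le ⟨i, t + 1, hlt, rfl, rfl⟩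
    rw [hP, hsplit, hxt]
    linarith
  · -- t = T i : z = xhat, stay at the equilibrium
    have hzx : z = xhat := by rw [← hxt, heqt]; exact (hadm i).2.2.2
    have hPz : costToGo Q R xhat T xs us z = 0 := by
      rw [hP, heqt, Finset.Ico_self, Finset.sum_empty]
    refine ⟨xhat, 0, ⟨i, T i, le_refl _, (hadm i).2.2.2⟩, hxX, h0U, ?_, ?_⟩
    · rw [hzx, Matrix.mulVec_zero, heq, add_zero]
    · have hstage : stageCost Q R xhat z 0 = 0 := by
        rw [hzx]; simp [stageCost]
      have hP0 : costToGo Q R xhat T xs us xhat ≤ 0 := by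
        apply costToGo_le
        exact ⟨i, T i, le_refl _, (hadm i).2.2.2, by rw [Finset.Ico_self, Finset.sum_empty]⟩
      rw [hstage, hPz]
      linarith

/-- The set of candidate MPC costs. -/
def JSet (A : Matrix (Fin n) (Fin n) ℝ) (B : Matrix (Fin n) (Fin m) ℝ)
    (X : Set (Fin n → ℝ)) (U : Set (Fin m → ℝ)) (SS : Set (Fin n → ℝ))
    (Q : Matrix (Fin n) (Fin n) ℝ) (R : Matrix (Fin m) (Fin m) ℝ) (xhat : Fin n → ℝ)
    (P : (Fin n → ℝ) → ℝ) (N : ℕ) (x0 : Fin n → ℝ) : Set ℝ :=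
  {c | ∃ (x : ℕ → Fin n → ℝ) (u : ℕ → Fin m → ℝ),
    FeasSeq A B X U SS N x0 x u ∧ c = seqCost Q R xhat P N x u}

lemma Jstar_eq (x0 : Fin n → ℝ) (P : (Fin n → ℝ) → ℝ) (N : ℕ) :
    Jstar A B X U (sampledSafeSet T xs) Q R xhat P N x0 =
      sInf (JSet A B X U (sampledSafeSet T xs) Q R xhat P N x0) := rfl

lemma JSet_nonneg (hQ : Q.PosDef) (hR : R.PosDef) {N : ℕ} {x0 : Fin n → ℝ} {c : ℝ}
    (hc : c ∈ JSet A B X U (sampledSafeSet T xs) Q R xhat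
      (costToGo Q R xhat T xs us) N x0) : 0 ≤ c := by
  obtain ⟨xc, uc, hfeas, rfl⟩ := hc
  have h1 : (0:ℝ) ≤ ∑ t ∈ Finset.range N, stageCost Q R xhat (xc t) (uc t) :=
    Finset.sum_nonneg fun k _ => stageCost_nonneg hQ hR _ _
  have h2 := costToGo_nonneg (us := us) (xhat := xhat) hQ hR hfeas.2.2.2.2
  unfold seqCost
  linarith

lemma Jstar_le (hQ : Q.PosDef) (hR : R.PosDef) {N : ℕ} {x0 : Fin n → ℝ}
    {xc : ℕ → Fin n → ℝ} {uc : ℕ → Fin m → ℝ}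
    (hfeas : FeasSeq A B X U (sampledSafeSet T xs) N x0 xc uc) :
    Jstar A B X U (sampledSafeSet T xs) Q R xhat (costToGo Q R xhat T xs us) N x0 ≤
      seqCost Q R xhat (costToGo Q R xhat T xs us) N xc uc :=
  csInf_le ⟨0, fun _ hc => JSet_nonneg hQ hR hc⟩ ⟨xc, uc, hfeas, rfl⟩

/-- One-step MPC cost decrease. -/
lemma mpc_decrease (hadm : ∀ i, AdmTraj A B X U xhat (T i) (xs i) (us i))
    (hQ : Q.PosDef) (hR : R.PosDef)
    (hxX : xhat ∈ X) (h0U : (0 : Fin m → ℝ) ∈ U) (heq : A.mulVec xhat = xhat)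
    {N : ℕ} (hN : 1 ≤ N) {x0 x1 : Fin n → ℝ} {u0 : Fin m → ℝ}
    (hd : x1 = A.mulVec x0 + B.mulVec u0)
    {xcl : ℕ → Fin n → ℝ} {ucl : ℕ → Fin m → ℝ}
    (hfeas : FeasSeq A B X U (sampledSafeSet T xs) N x0 xcl ucl)
    (hcost : seqCost Q R xhat (costToGo Q R xhat T xs us) N xcl ucl =
      Jstar A B X U (sampledSafeSet T xs) Q R xhat (costToGo Q R xhat T xs us) N x0)
    (hu0 : ucl 0 = u0) :
    Jstar A B X U (sampledSafeSet T xs) Q R xhat (costToGo Q R xhat T xs us) N x1 +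
      stageCost Q R xhat x0 u0 ≤
    Jstar A B X U (sampledSafeSet T xs) Q R xhat (costToGo Q R xhat T xs us) N x0 := by
  obtain ⟨hcl0, hcldyn, hclX, hclU, hclSS⟩ := hfeas
  obtain ⟨z', uSS, hz'SS, hz'X, huSSU, hz'dyn, hz'cost⟩ :=
    terminal_step (us := us) (Q := Q) (R := R) hadm hQ hR hxX h0U heq hclSS
  obtain ⟨M, rfl⟩ : ∃ M, N = M + 1 := ⟨N - 1, (Nat.succ_pred_eq_of_pos hN).symm⟩
  set P := costToGo Q R xhat T xs us with hPdef
  -- candidate shifted sequence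
  set x' : ℕ → Fin n → ℝ := fun t => if t < M + 1 then xcl (t + 1) else z' with hx'def
  set u' : ℕ → Fin m → ℝ := fun t => if t + 1 < M + 1 then ucl (t + 1) else uSS with hu'def
  have hx'lt : ∀ t, t < M + 1 → x' t = xcl (t + 1) := fun t ht => if_pos ht
  have hx'N : x' (M + 1) = z' := if_neg (lt_irrefl _)
  have hfeas' : FeasSeq A B X U (sampledSafeSet T xs) (M + 1) x1 x' u' := by
    refine ⟨?_, ?_, ?_, ?_, ?_⟩
    · rw [hx'lt 0 (Nat.succ_pos M), hcldyn 0 (Nat.succ_pos M), hcl0, hu0, hd]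
    · intro t ht
      rcases lt_or_eq_of_le (Nat.lt_succ_iff.mp ht) with h | h
      · have h1 : t + 1 < M + 1 := Nat.succ_lt_succ h
        rw [hx'lt _ h1, hx'lt _ ht]
        show xcl (t + 1 + 1) = _ + B.mulVec (u' t)
        rw [hu'def]
        simp only [if_pos h1]
        exact hcldyn (t + 1) h1
      · subst h
        rw [hx'N, hx'lt _ ht]
        show z' = _ + B.mulVec (u' t)
        rw [hu'def]
        simp only [lt_self_iff_false, if_false]
        rw [hz'dyn]
    · intro t ht
      rcases lt_or_eq_of_le (Nat.lt_succ_iff.mp ht) with h | h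
      · rw [hx'lt _ (Nat.succ_lt_succ h)]
        exact hclX (t + 1) (Nat.succ_lt_succ h)
      · subst h; rw [hx'N]; exact hz'X
    · intro t ht
      rcases lt_or_eq_of_le (Nat.lt_succ_iff.mp ht) with h | h
      · have h1 : t + 1 < M + 1 := Nat.succ_lt_succ h
        rw [hu'def]; simp only [if_pos h1]
        exact hclU (t + 1) h1
      · subst h
        rw [hu'def]; simp only [lt_self_iff_false, if_false]
        exact huSSU
    · rw [hx'N]; exact hz'SS
  have hJle := Jstar_le (us := us) (xhat := xhat) hQ hR hfeas'
  -- compute candidate cost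
  have hcand : seqCost Q R xhat P (M + 1) x' u' =
      (∑ t ∈ Finset.range M, stageCost Q R xhat (xcl (t + 1)) (ucl (t + 1))) +
        stageCost Q R xhat (xcl (M + 1)) uSS + P z' := by
    unfold seqCost
    rw [hx'N, Finset.sum_range_succ]
    congr 2
    · apply Finset.sum_congr rfl
      intro t ht
      have h1 : t < M + 1 := Nat.lt_succ_of_lt (Finset.mem_range.mp ht)
      have h2 : t + 1 < M + 1 := Nat.succ_lt_succ (Finset.mem_range.mp ht)
      rw [hx'lt _ h1, hu'def]
      simp only [if_pos h2]
    · rw [hx'lt _ (Nat.lt_succ_self M), hu'def]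
      simp only [lt_self_iff_false, if_false]
  have hold : seqCost Q R xhat P (M + 1) xcl ucl =
      stageCost Q R xhat x0 u0 +
        ((∑ t ∈ Finset.range M, stageCost Q R xhat (xcl (t + 1)) (ucl (t + 1))) +
          P (xcl (M + 1))) := by
    unfold seqCost
    rw [Finset.sum_range_succ']
    rw [hcl0, hu0]
    ring
  rw [← hcost, hold]
  rw [hcand] at hJle
  linarith

end Aux

/-- Theorem 3, obstacle-free case: non-increasing iteration costs. Let
`xhat` be an equilibrium, let `SS`, `P` be the sampled safe set and cost-to-go of a finite
nonempty family of admissible trajectories to `xhat`, and let `(xs j, us j)` be a stored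
trajectory of length `T j ≥ N` starting at `xhatp`. Then along any new closed-loop
execution of the task starting at `xhatp`, whose inputs are first inputs of optimal
`N`-step feasible sequences, the accumulated stage cost never exceeds the cost of the
stored execution, regardless of which agent produced the stored trajectory. -/
theorem non_increasing_iteration_costs {n m : ℕ}
    (A : Matrix (Fin n) (Fin n) ℝ) (B : Matrix (Fin n) (Fin m) ℝ)
    (X : Set (Fin n → ℝ)) (U : Set (Fin m → ℝ))
    (xhat xhatp : Fin n → ℝ)
    (Q : Matrix (Fin n) (Fin n) ℝ) (R : Matrix (Fin m) (Fin m) ℝ)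
    (hQ : Q.PosDef) (hR : R.PosDef)
    (N : ℕ) (hN : 1 ≤ N)
    (hxX : xhat ∈ X) (h0U : (0 : Fin m → ℝ) ∈ U) (heq : A.mulVec xhat = xhat)
    {ι : Type} [Fintype ι] [Nonempty ι]
    (T : ι → ℕ) (xs : ι → ℕ → Fin n → ℝ) (us : ι → ℕ → Fin m → ℝ)
    (hadm : ∀ i, AdmTraj A B X U xhat (T i) (xs i) (us i))
    (j : ι) (hTj : N ≤ T j) (hstart : xs j 0 = xhatp)
    (x : ℕ → Fin n → ℝ) (u : ℕ → Fin m → ℝ)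
    (hx0 : x 0 = xhatp)
    (hdyn : ∀ k, x (k + 1) = A.mulVec (x k) + B.mulVec (u k))
    (hopt : ∀ k, ∃ (xcl : ℕ → Fin n → ℝ) (ucl : ℕ → Fin m → ℝ),
      FeasSeq A B X U (sampledSafeSet T xs) N (x k) xcl ucl ∧
      seqCost Q R xhat (costToGo Q R xhat T xs us) N xcl ucl =
        Jstar A B X U (sampledSafeSet T xs) Q R xhat (costToGo Q R xhat T xs us) N (x k) ∧
      ucl 0 = u k) :
    ∀ K : ℕ, (∑ k ∈ Finset.range K, stageCost Q R xhat (x k) (u k)) ≤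
      ∑ t ∈ Finset.range (T j), stageCost Q R xhat (xs j t) (us j t) := by
  intro K
  set SS := sampledSafeSet T xs with hSS
  set P := costToGo Q R xhat T xs us with hP
  set J := fun z => Jstar A B X U SS Q R xhat P N z with hJ
  have hdec : ∀ k, J (x (k + 1)) + stageCost Q R xhat (x k) (u k) ≤ J (x k) := by
    intro k
    obtain ⟨xcl, ucl, hfeas, hcost, hu0⟩ := hopt k
    exact mpc_decrease hadm hQ hR hxX h0U heq hN (hdyn k) hfeas hcost hu0
  have hsum : ∀ L, (∑ k ∈ Finset.range L, stageCost Q R xhat (x k) (u k)) + J (x L) ≤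
      J (x 0) := by
    intro L
    induction L with
    | zero => simp
    | succ L ih =>
      rw [Finset.sum_range_succ]
      have := hdec L
      linarith
  have hJnn : ∀ k, 0 ≤ J (x k) := by
    intro k
    obtain ⟨xcl, ucl, hfeas, _, _⟩ := hopt k
    exact le_csInf ⟨_, xcl, ucl, hfeas, rfl⟩ (fun c hc => JSet_nonneg hQ hR hc)
  have hinit : J (x 0) ≤ ∑ t ∈ Finset.range (T j), stageCost Q R xhat (xs j t) (us j t) := by
    have hfeasj : FeasSeq A B X U SS N xhatp (xs j) (us j) := by
      obtain ⟨hd, hXj, hUj, _⟩ := hadm j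
      exact ⟨hstart, fun t ht => hd t (lt_of_lt_of_le ht hTj),
        fun t ht => hXj (t + 1) (Nat.succ_le_of_lt (lt_of_lt_of_le ht hTj)),
        fun t ht => hUj t (lt_of_lt_of_le ht hTj), ⟨j, N, hTj, rfl⟩⟩
    have h1 := Jstar_le (us := us) (xhat := xhat) hQ hR hfeasj
    have h2 : P (xs j N) ≤ ∑ k ∈ Finset.Ico N (T j), stageCost Q R xhat (xs j k) (us j k) :=
      costToGo_le ⟨j, N, hTj, rfl, rfl⟩
    have h3 : ∑ t ∈ Finset.range (T j), stageCost Q R xhat (xs j t) (us j t) =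
        (∑ t ∈ Finset.range N, stageCost Q R xhat (xs j t) (us j t)) +
        ∑ k ∈ Finset.Ico N (T j), stageCost Q R xhat (xs j k) (us j k) := by
      simp only [Finset.range_eq_Ico]
      rw [Finset.sum_Ico_consecutive _ (Nat.zero_le N) hTj]
    rw [hx0]
    calc J xhatp ≤ seqCost Q R xhat P N (xs j) (us j) := h1
      _ ≤ _ := by unfold seqCost; rw [h3]; linarith
  have h4 := hsum K
  have h5 := hJnn K
  linarith
end

section
/- Monotonicity of the learning data: let 𝒯 ⊆ 𝒯′ be two finite nonempty families of admissible trajectories to x̂, with sampled safe sets SS ⊆ SS′ and cost-to-go functions P and P′. Then SS ⊆ SS′; P′(z) ≤ P(z) for every z ∈ SS; every N-step feasible sequence for the data (SS, P) is also feasible for (SS′, P′) with cost at most its (SS, P)-cost; and consequently J*′(x0) ≤ J*(x0) for every x0 at which the (SS, P)-problem is feasible. -/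
open Matrix

lemma stage_nonneg {n m : ℕ} {Q : Matrix (Fin n) (Fin n) ℝ} {R : Matrix (Fin m) (Fin m) ℝ}
    (hQ : Q.PosDef) (hR : R.PosDef) (xhat x : Fin n → ℝ) (u : Fin m → ℝ) :
    0 ≤ stageCost Q R xhat x u := by
  have h1 := hQ.posSemidef.dotProduct_mulVec_nonneg (x - xhat)
  have h2 := hR.posSemidef.dotProduct_mulVec_nonneg u
  simp only [RCLike.star_def, star_trivial] at h1 h2
  exact add_nonneg (by simpa using h1) (by simpa using h2)

/-- monotonicity of the learning data. If the family indexed by `ι` is a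
subfamily of the family indexed by `ι'` (via an injection `φ` that preserves lengths,
states, and inputs), then the sampled safe set grows, the cost-to-go decreases, every
feasible sequence for the smaller data remains feasible with no larger cost for the
bigger data, and the value function does not increase at every feasible point. -/
theorem learning_data_monotonicity {n m : ℕ}
    (A : Matrix (Fin n) (Fin n) ℝ) (B : Matrix (Fin n) (Fin m) ℝ)
    (X : Set (Fin n → ℝ)) (U : Set (Fin m → ℝ)) (xhat : Fin n → ℝ)
    (Q : Matrix (Fin n) (Fin n) ℝ) (R : Matrix (Fin m) (Fin m) ℝ)
    (hQ : Q.PosDef) (hR : R.PosDef)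
    (N : ℕ) (hN : 1 ≤ N)
    {ι ι' : Type} [Fintype ι] [Nonempty ι] [Fintype ι'] [Nonempty ι']
    (T : ι → ℕ) (xs : ι → ℕ → Fin n → ℝ) (us : ι → ℕ → Fin m → ℝ)
    (T' : ι' → ℕ) (xs' : ι' → ℕ → Fin n → ℝ) (us' : ι' → ℕ → Fin m → ℝ)
    (hadm : ∀ i, AdmTraj A B X U xhat (T i) (xs i) (us i))
    (hadm' : ∀ i, AdmTraj A B X U xhat (T' i) (xs' i) (us' i))
    (φ : ι → ι') (hφ : Function.Injective φ)
    (hT : ∀ i, T' (φ i) = T i) (hxs : ∀ i, xs' (φ i) = xs i) (hus : ∀ i, us' (φ i) = us i) :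
    sampledSafeSet T xs ⊆ sampledSafeSet T' xs' ∧
    (∀ z ∈ sampledSafeSet T xs, costToGo Q R xhat T' xs' us' z ≤ costToGo Q R xhat T xs us z) ∧
    (∀ (x0 : Fin n → ℝ) (x : ℕ → Fin n → ℝ) (u : ℕ → Fin m → ℝ),
      FeasSeq A B X U (sampledSafeSet T xs) N x0 x u →
      FeasSeq A B X U (sampledSafeSet T' xs') N x0 x u ∧
      seqCost Q R xhat (costToGo Q R xhat T' xs' us') N x u ≤
        seqCost Q R xhat (costToGo Q R xhat T xs us) N x u) ∧
    (∀ x0 : Fin n → ℝ,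
      (∃ (x : ℕ → Fin n → ℝ) (u : ℕ → Fin m → ℝ),
        FeasSeq A B X U (sampledSafeSet T xs) N x0 x u) →
      Jstar A B X U (sampledSafeSet T' xs') Q R xhat (costToGo Q R xhat T' xs' us') N x0 ≤
        Jstar A B X U (sampledSafeSet T xs) Q R xhat (costToGo Q R xhat T xs us) N x0) := by
  classical
  -- notation
  set SS := sampledSafeSet T xs with hSSdef
  set SS' := sampledSafeSet T' xs' with hSS'def
  set P := costToGo Q R xhat T xs us with hPdef
  set P' := costToGo Q R xhat T' xs' us' with hP'def
  have hstage : ∀ (x : Fin n → ℝ) (u : Fin m → ℝ), 0 ≤ stageCost Q R xhat x u :=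
    fun x u => stage_nonneg hQ hR xhat x u
  -- Part 1 : SS ⊆ SS'
  have hSSsub : SS ⊆ SS' := by
    rintro z ⟨i, t, ht, hx⟩
    exact ⟨φ i, t, by rw [hT i]; exact ht, by rw [hxs i]; exact hx⟩
  -- cost-to-go sets
  have hsetsub : ∀ z : Fin n → ℝ,
      {c | ∃ i, ∃ t ≤ T i, xs i t = z ∧
        c = ∑ k ∈ Finset.Ico t (T i), stageCost Q R xhat (xs i k) (us i k)} ⊆
      {c | ∃ i, ∃ t ≤ T' i, xs' i t = z ∧
        c = ∑ k ∈ Finset.Ico t (T' i), stageCost Q R xhat (xs' i k) (us' i k)} := by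
    rintro z c ⟨i, t, ht, hx, hc⟩
    exact ⟨φ i, t, by rw [hT i]; exact ht, by rw [hxs i]; exact hx,
      by rw [hT i, hxs i, hus i]; exact hc⟩
  have hnonneg' : ∀ z : Fin n → ℝ, ∀ c ∈
      {c | ∃ i, ∃ t ≤ T' i, xs' i t = z ∧
        c = ∑ k ∈ Finset.Ico t (T' i), stageCost Q R xhat (xs' i k) (us' i k)},
      (0:ℝ) ≤ c := by
    rintro z c ⟨i, t, ht, hx, rfl⟩
    exact Finset.sum_nonneg fun k _ => hstage _ _
  have hbdd' : ∀ z : Fin n → ℝ, BddBelow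
      {c | ∃ i, ∃ t ≤ T' i, xs' i t = z ∧
        c = ∑ k ∈ Finset.Ico t (T' i), stageCost Q R xhat (xs' i k) (us' i k)} :=
    fun z => ⟨0, fun c hc => hnonneg' z c hc⟩
  have hne : ∀ z ∈ SS,
      Set.Nonempty {c | ∃ i, ∃ t ≤ T i, xs i t = z ∧
        c = ∑ k ∈ Finset.Ico t (T i), stageCost Q R xhat (xs i k) (us i k)} := by
    rintro z ⟨i, t, ht, hx⟩
    exact ⟨_, i, t, ht, hx, rfl⟩
  -- Part 2 : P' ≤ P on SS
  have hPle : ∀ z ∈ SS, P' z ≤ P z := by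
    intro z hz
    exact csInf_le_csInf (hbdd' z) (hne z hz) (hsetsub z)
  -- P' nonnegative on SS'
  have hP'nonneg : ∀ z ∈ SS', 0 ≤ P' z := by
    rintro z ⟨i, t, ht, hx⟩
    exact le_csInf ⟨_, i, t, ht, hx, rfl⟩ (fun c hc => hnonneg' z c hc)
  -- Part 3
  have hpart3 : ∀ (x0 : Fin n → ℝ) (x : ℕ → Fin n → ℝ) (u : ℕ → Fin m → ℝ),
      FeasSeq A B X U SS N x0 x u →
      FeasSeq A B X U SS' N x0 x u ∧
      seqCost Q R xhat P' N x u ≤ seqCost Q R xhat P N x u := by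
    rintro x0 x u ⟨h0, hdyn, hX, hU, hend⟩
    refine ⟨⟨h0, hdyn, hX, hU, hSSsub hend⟩, ?_⟩
    unfold seqCost
    exact add_le_add_right (hPle _ hend) _
  refine ⟨hSSsub, hPle, hpart3, ?_⟩
  -- Part 4
  rintro x0 ⟨x, u, hfeas⟩
  have hS'bdd : BddBelow {c | ∃ (x : ℕ → Fin n → ℝ) (u : ℕ → Fin m → ℝ),
      FeasSeq A B X U SS' N x0 x u ∧ c = seqCost Q R xhat P' N x u} := by
    refine ⟨0, ?_⟩
    rintro c ⟨x', u', hf, rfl⟩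
    exact add_nonneg (Finset.sum_nonneg fun k _ => hstage _ _) (hP'nonneg _ hf.2.2.2.2)
  show sInf _ ≤ sInf _
  refine le_csInf ⟨_, x, u, hfeas, rfl⟩ ?_
  rintro c ⟨x', u', hf, rfl⟩
  obtain ⟨hf', hcost⟩ := hpart3 x0 x' u' hf
  exact le_trans (csInf_le hS'bdd ⟨x', u', hf', rfl⟩) hcost
end
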